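/- On T^{1,1} with η = (1/3)(dψ + cosθ_1 dφ_1 + cosθ_2 dφ_2), the functions h_0 = 1, h_1 = (1/3)cosθ_1, h_2 = (1/3)cosθ_2, h_3 = φ_1, h_4 = φ_2 all satisfy R(h_i) = 0, and the pairwise Jacobi brackets [h_i, h_j]_η vanish for i,j ∈ {0,1,2} (the action-type integrals are in involution). -/
import Mathlib


open scoped BigOperators
open Real

noncomputable section

/-- Coordinate chart of the Sasaki–Einstein space T^{1,1}:
coordinates (θ₁, θ₂, φ₁, φ₂, ψ). -/
abbrev T11 := ℝ × ℝ × ℝ × ℝ × ℝ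

/-- Coordinate projections. -/
def cθ₁ (x : T11) : ℝ := x.1
def cθ₂ (x : T11) : ℝ := x.2.1
def cφ₁ (x : T11) : ℝ := x.2.2.1
def cφ₂ (x : T11) : ℝ := x.2.2.2.1
def cψ (x : T11) : ℝ := x.2.2.2.2

/-- Basis tangent vectors ∂/∂θ₁, ∂/∂θ₂, ∂/∂φ₁, ∂/∂φ₂, ∂/∂ψ. -/
def eθ₁ : T11 := (1, 0, 0, 0, 0)
def eθ₂ : T11 := (0, 1, 0, 0, 0)
def eφ₁ : T11 := (0, 0, 1, 0, 0)
def eφ₂ : T11 := (0, 0, 0, 1, 0)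
def eψ : T11 := (0, 0, 0, 0, 1)

/-- The contact form η = (1/3)(dψ + cosθ₁ dφ₁ + cosθ₂ dφ₂). -/
def ηSE (x v : T11) : ℝ :=
  (1 / 3) * (cψ v + Real.cos (cθ₁ x) * cφ₁ v + Real.cos (cθ₂ x) * cφ₂ v)

/-- dη = -(1/3)(sinθ₁ dθ₁ ∧ dφ₁ + sinθ₂ dθ₂ ∧ dφ₂). -/
def dηSE (x u v : T11) : ℝ :=
  -(1 / 3) * (Real.sin (cθ₁ x) * (cθ₁ u * cφ₁ v - cφ₁ u * cθ₁ v)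
            + Real.sin (cθ₂ x) * (cθ₂ u * cφ₂ v - cφ₂ u * cθ₂ v))

/-- The Reeb vector field R = 3∂/∂ψ. -/
def RSE : T11 := (0, 0, 0, 0, 3)

/-- The Reeb derivative R(f) = 3 ∂f/∂ψ. -/
def RdSE (f : T11 → ℝ) (x : T11) : ℝ := fderiv ℝ f x RSE

/-- The contact Hamiltonian vector field of H on T^{1,1}:
X_H = 3Σᵢ (1/sinθᵢ)(∂H/∂φᵢ - cosθᵢ ∂H/∂ψ)∂/∂θᵢ - 3Σᵢ (1/sinθᵢ)(∂H/∂θᵢ)∂/∂φᵢ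
      + 3(H + Σᵢ (cosθᵢ/sinθᵢ)∂H/∂θᵢ)∂/∂ψ. -/
def XSE (H : T11 → ℝ) (x : T11) : T11 :=
  (3 * (1 / Real.sin (cθ₁ x)) * (fderiv ℝ H x eφ₁ - Real.cos (cθ₁ x) * fderiv ℝ H x eψ),
   3 * (1 / Real.sin (cθ₂ x)) * (fderiv ℝ H x eφ₂ - Real.cos (cθ₂ x) * fderiv ℝ H x eψ),
   -(3 * (1 / Real.sin (cθ₁ x)) * fderiv ℝ H x eθ₁),
   -(3 * (1 / Real.sin (cθ₂ x)) * fderiv ℝ H x eθ₂),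
   3 * (H x + (Real.cos (cθ₁ x) / Real.sin (cθ₁ x)) * fderiv ℝ H x eθ₁
            + (Real.cos (cθ₂ x) / Real.sin (cθ₂ x)) * fderiv ℝ H x eθ₂))

/-- The Jacobi bracket [f,g]_η = -ι_{X_f} ι_{X_g} dη + f·R(g) - g·R(f). -/
def JacSE (f g : T11 → ℝ) (x : T11) : ℝ :=
  -(dηSE x (XSE g x) (XSE f x)) + f x * RdSE g x - g x * RdSE f x

/-- The five first integrals h₀ = 1, h₁ = (1/3)cosθ₁, h₂ = (1/3)cosθ₂, h₃ = φ₁, h₄ = φ₂. -/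
def hInt : Fin 5 → T11 → ℝ
  | 0 => fun _ => 1
  | 1 => fun x => (1 / 3) * Real.cos (cθ₁ x)
  | 2 => fun x => (1 / 3) * Real.cos (cθ₂ x)
  | 3 => fun x => cφ₁ x
  | 4 => fun x => cφ₂ x


open ContinuousLinearMap in
def L2se : T11 →L[ℝ] ℝ := (fst ℝ ℝ (ℝ×ℝ×ℝ)).comp (snd ℝ ℝ (ℝ×ℝ×ℝ×ℝ))
open ContinuousLinearMap in
def L3se : T11 →L[ℝ] ℝ := (fst ℝ ℝ (ℝ×ℝ)).comp ((snd ℝ ℝ (ℝ×ℝ×ℝ)).comp (snd ℝ ℝ (ℝ×ℝ×ℝ×ℝ)))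
open ContinuousLinearMap in
def L4se : T11 →L[ℝ] ℝ := (fst ℝ ℝ ℝ).comp ((snd ℝ ℝ (ℝ×ℝ)).comp ((snd ℝ ℝ (ℝ×ℝ×ℝ)).comp (snd ℝ ℝ (ℝ×ℝ×ℝ×ℝ))))

lemma fdh0 (x v : T11) : fderiv ℝ (hInt 0) x v = 0 := by
  rw [show hInt 0 = (fun _ : T11 => (1:ℝ)) from rfl]; simp

lemma fdh1 (x v : T11) : fderiv ℝ (hInt 1) x v = -((1/3) * Real.sin x.1) * v.1 := by
  have hc : HasFDerivAt (fun x : T11 => (1/3) * Real.cos x.1)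
      ((1/3 : ℝ) • (-Real.sin x.1 • ContinuousLinearMap.fst ℝ ℝ (ℝ×ℝ×ℝ×ℝ))) x :=
    HasFDerivAt.const_mul ((Real.hasDerivAt_cos x.1).comp_hasFDerivAt x (hasFDerivAt_fst (p := x))) (1/3 : ℝ)
  rw [show hInt 1 = (fun x : T11 => (1/3) * Real.cos x.1) from rfl, hc.fderiv]
  simp; ring

lemma fdh2 (x v : T11) : fderiv ℝ (hInt 2) x v = -((1/3) * Real.sin x.2.1) * v.2.1 := by
  have hp : HasFDerivAt (fun x : T11 => x.2.1) L2se x := L2se.hasFDerivAt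
  have hc : HasFDerivAt (fun x : T11 => (1/3) * Real.cos x.2.1)
      ((1/3 : ℝ) • (-Real.sin x.2.1 • L2se)) x :=
    HasFDerivAt.const_mul ((Real.hasDerivAt_cos x.2.1).comp_hasFDerivAt x hp) (1/3 : ℝ)
  rw [show hInt 2 = (fun x : T11 => (1/3) * Real.cos x.2.1) from rfl, hc.fderiv]
  simp [L2se]; ring

lemma fdh3 (x v : T11) : fderiv ℝ (hInt 3) x v = v.2.2.1 := by
  have h : HasFDerivAt (fun x : T11 => x.2.2.1) L3se x := L3se.hasFDerivAt
  rw [show hInt 3 = (fun x : T11 => x.2.2.1) from rfl, h.fderiv]; rfl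

lemma fdh4 (x v : T11) : fderiv ℝ (hInt 4) x v = v.2.2.2.1 := by
  have h : HasFDerivAt (fun x : T11 => x.2.2.2.1) L4se x := L4se.hasFDerivAt
  rw [show hInt 4 = (fun x : T11 => x.2.2.2.1) from rfl, h.fderiv]; rfl


lemma fdh0' (x v : T11) : fderiv ℝ (fun _ : T11 => (1:ℝ)) x v = 0 := fdh0 x v
lemma fdh1' (x v : T11) : fderiv ℝ (fun x : T11 => 1 / 3 * Real.cos x.1) x v
    = -((1/3) * Real.sin x.1) * v.1 := fdh1 x v
lemma fdh2' (x v : T11) : fderiv ℝ (fun x : T11 => 1 / 3 * Real.cos x.2.1) x v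
    = -((1/3) * Real.sin x.2.1) * v.2.1 := fdh2 x v
lemma fdh3' (x v : T11) : fderiv ℝ (fun x : T11 => x.2.2.1) x v = v.2.2.1 := fdh3 x v
lemma fdh4' (x v : T11) : fderiv ℝ (fun x : T11 => x.2.2.2.1) x v = v.2.2.2.1 := fdh4 x v

/-- the functions h₀,...,h₄ all satisfy R(hᵢ) = 0, and the Jacobi brackets
[hᵢ,hⱼ]_η vanish for i,j ∈ {0,1,2} (on the chart θᵢ ∈ (0,π)). -/
theorem T11_integrals_in_involution :
    (∀ (i : Fin 5) (x : T11), RdSE (hInt i) x = 0) ∧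
    (∀ i j : Fin 5, (i : ℕ) < 3 → (j : ℕ) < 3 →
      ∀ x : T11, cθ₁ x ∈ Set.Ioo 0 π → cθ₂ x ∈ Set.Ioo 0 π →
        JacSE (hInt i) (hInt j) x = 0) := by
  constructor
  · intro i x
    fin_cases i <;>
      simp [RdSE, RSE, fdh0, fdh1, fdh2, fdh3, fdh4]
  · intro i j hi hj x h1 h2
    fin_cases i <;> fin_cases j <;>
      first
      | exact absurd hi (by decide)
      | exact absurd hj (by decide)
      | (simp only [JacSE, XSE, dηSE, RdSE, hInt, cθ₁, cθ₂, cφ₁, cφ₂, cψ, Fin.isValue]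
         simp only [fdh0', fdh1', fdh2', fdh3', fdh4']
         simp [eθ₁, eθ₂, eφ₁, eφ₂, eψ, RSE]
         try ring)
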